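/- arXiv:1509.04950 — 5 statements merged into one kernel-verified Lean document; each statement's English description precedes it below -/
import Mathlib

section
/- Fix an odd integer n ≥ 3, set n* = (n+1)/2 and S = {1, …, n*}. Let T be a triangle of odd perimeter bounded by n (a 3-point R_{n*}-metric space whose three nonzero distances have odd sum ≤ n), and let (X,δ) be a path extension of T over S (with respect to the truncated addition r ⊕ s = min(n*, r + s)). Then for every R_{n*}-metric space A omitting triangles of odd perimeter bounded by n, there is no weak homomorphism from (X,δ) to A. That is, the class of triangles of odd perimeter bounded by n is closed under path extensions over S. -/
/-- An `R_N`-metric: a ℕ-valued metric all of whose values are at most `N`. -/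
def IsTruncMetric (N : ℕ) {α : Type*} (d : α → α → ℕ) : Prop :=
  (∀ a b, d a b ≤ N) ∧ (∀ a b, d a b = 0 ↔ a = b) ∧ (∀ a b, d a b = d b a) ∧
  (∀ a b c, d a c ≤ d a b + d b c)

/-- `d` omits triangles of odd perimeter bounded by `n`. -/
def OmitsOddTriangles (n : ℕ) {α : Type*} (d : α → α → ℕ) : Prop :=
  ∀ a b c : α, a ≠ b → b ≠ c → a ≠ c →
    d a b + d b c + d c a ≤ n → ¬ Odd (d a b + d b c + d c a)

/-- The `+_N`-sum (addition truncated at `N`) of the values of a partial function `δ`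
along consecutive pairs of a list. -/
def listDeltaSumTrunc (N : ℕ) {X : Type*} (δ : X → X → Option ℕ) :
    List X → Option ℕ
  | [] => none
  | [_] => some 0
  | a :: b :: l =>
      (δ a b).bind fun r => (listDeltaSumTrunc N δ (b :: l)).map fun s => min N (r + s)

/-- `(X, δ)` (presented by an injection `j : Y → X`) is a path extension of the
`R_N`-metric space `(Y, dY)` over `S`, with respect to addition truncated at `N`. -/
def IsPathExtensionOverTrunc (N : ℕ) {Y X : Type*} (dY : Y → Y → ℕ) (S : Finset ℕ)
    (j : Y → X) (δ : X → X → Option ℕ) : Prop :=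
  Function.Injective j ∧
  (∀ x, δ x x = some 0) ∧ (∀ x y, δ x y = δ y x) ∧
  (∀ y y' r, δ (j y) (j y') = some r → r = dY y y') ∧
  (∀ x y r, δ x y = some r → r ≠ 0 → r ∈ S) ∧
  ∃ path : Y → Y → List X,
    (∀ y y', δ (j y) (j y') = none →
      (path y y').head? = some (j y) ∧ (path y y').getLast? = some (j y') ∧
      listDeltaSumTrunc N δ (path y y') = some (dY y y')) ∧
    (∀ x : X, (∃ y, j y = x) ∨ ∃ y y', δ (j y) (j y') = none ∧ x ∈ path y y')


/-!
Map everything into `A` by the weak homomorphism `f`. Each side of `T` is shorter than `n*`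
(twice a side is less than the odd perimeter, which is at most `n`), so the truncated sum
along its path is an honest sum, and the image of that path is a walk in `A` of the same
length. The three walks close up into a closed walk in `A` of odd length at most `n`. But in
`A` every closed walk of length at most `n` has even length: cutting off one triangle at a
time keeps the length bounded by `n` and, since `A` omits odd triangles of perimeter at most
`n`, preserves its parity.
-/

inductive HasWalkOfLength {α : Type*} (d : α → α → ℕ) : α → α → ℕ → Prop
  | refl (a : α) : HasWalkOfLength d a a 0
  | cons {a b c : α} {k : ℕ} : HasWalkOfLength d b c k → HasWalkOfLength d a c (d a b + k)

namespace HasWalkOfLength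

variable {α : Type*} {d : α → α → ℕ}

theorem single (a b : α) : HasWalkOfLength d a b (d a b) :=
  (refl b).cons

theorem append {a b c : α} {k m : ℕ} (h₁ : HasWalkOfLength d a b k)
    (h₂ : HasWalkOfLength d b c m) : HasWalkOfLength d a c (k + m) := by
  induction h₁ with
  | refl => simpa using h₂
  | cons _ ih => simpa [Nat.add_assoc] using (ih h₂).cons

theorem dist_le (hzero : ∀ a, d a a = 0) (htri : ∀ a b c, d a c ≤ d a b + d b c)
    {a b : α} {k : ℕ} (h : HasWalkOfLength d a b k) : d a b ≤ k := by
  induction h with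
  | refl a => simp [hzero]
  | @cons a b c k _ ih => have := htri a b c; omega

end HasWalkOfLength

section OddTriangles

variable {α : Type*} {d : α → α → ℕ}

theorem two_mul_le_perimeter (hsymm : ∀ a b, d a b = d b a)
    (htri : ∀ a b c, d a c ≤ d a b + d b c) (a b c : α) :
    2 * d a b ≤ d a b + d b c + d c a := by
  have := htri a c b
  have := hsymm a c
  have := hsymm c b
  omega

theorem even_perimeter_of_omitsOddTriangles {n : ℕ} (hzero : ∀ a, d a a = 0)
    (hsymm : ∀ a b, d a b = d b a) (hfree : OmitsOddTriangles n d) (a b c : α)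
    (hle : d a b + d b c + d c a ≤ n) : Even (d a b + d b c + d c a) := by
  by_cases hab : a = b
  · subst hab; rw [hzero, hsymm c a]; exact ⟨d a c, by ring⟩
  by_cases hbc : b = c
  · subst hbc; rw [hzero, hsymm b a]; exact ⟨d a b, by ring⟩
  by_cases hac : a = c
  · subst hac; rw [hzero, hsymm b a]; exact ⟨d a b, by ring⟩
  exact Nat.not_odd_iff_even.mp (hfree a b c hab hbc hac hle)

theorem HasWalkOfLength.even_add_dist {n : ℕ} (hzero : ∀ a, d a a = 0)
    (hsymm : ∀ a b, d a b = d b a) (htri : ∀ a b c, d a c ≤ d a b + d b c)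
    (hfree : OmitsOddTriangles n d) {a b : α} {k : ℕ} (h : HasWalkOfLength d a b k)
    (hle : k + d b a ≤ n) : Even (k + d b a) := by
  induction h with
  | refl a => simp [hzero]
  | @cons a b c k hwalk ih =>
    -- split off the triangle `a b c`; the rest `b ⇝ c → b` is no longer, as `d c b ≤ d c a + d a b`
    have hbc := hwalk.dist_le hzero htri
    have hcb := htri c a b
    have hsymm_bc := hsymm b c
    have hrest := ih (by omega)
    have htriangle := even_perimeter_of_omitsOddTriangles hzero hsymm hfree a b c (by omega)
    rw [Nat.even_iff] at hrest htriangle ⊢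
    omega

theorem HasWalkOfLength.even_of_closed {n : ℕ} (hzero : ∀ a, d a a = 0)
    (hsymm : ∀ a b, d a b = d b a) (htri : ∀ a b c, d a c ≤ d a b + d b c)
    (hfree : OmitsOddTriangles n d) {a : α} {k : ℕ} (h : HasWalkOfLength d a a k)
    (hle : k ≤ n) : Even k := by
  simpa [hzero] using h.even_add_dist hzero hsymm htri hfree (by simpa [hzero] using hle)

end OddTriangles

section PathExtension

variable {X α : Type*} {N : ℕ} {δ : X → X → Option ℕ} {d : α → α → ℕ} {f : X → α}

theorem hasWalkOfLength_of_listDeltaSumTrunc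
    (hf : ∀ x y r, δ x y = some r → d (f x) (f y) = r) :
    ∀ {L : List X} {s : ℕ} {x x' : X}, listDeltaSumTrunc N δ L = some s → s < N →
      L.head? = some x → L.getLast? = some x' → HasWalkOfLength d (f x) (f x') s
  | [], _, _, _, hs, _, _, _ => by simp [listDeltaSumTrunc] at hs
  | [a], s, x, x', hs, _, hx, hx' => by
    simp only [listDeltaSumTrunc, Option.some.injEq, List.head?_cons,
      List.getLast?_singleton] at hs hx hx'
    subst hs hx hx'
    exact .refl _
  | a :: b :: l, s, x, x', hs, hlt, hx, hx' => by
    simp only [listDeltaSumTrunc, Option.bind_eq_some_iff, Option.map_eq_some_iff] at hs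
    obtain ⟨r, hr, s', hs', rfl⟩ := hs
    simp only [List.head?_cons, Option.some.injEq] at hx
    subst hx
    -- the truncated sum stays below `N`, so no truncation happened
    have htail := hasWalkOfLength_of_listDeltaSumTrunc hf hs' (by omega) rfl
      (by simpa [List.getLast?_cons_cons] using hx')
    have hsum : min N (r + s') = d (f a) (f b) + s' := by rw [hf _ _ r hr]; omega
    exact hsum ▸ htail.cons

theorem IsPathExtensionOverTrunc.hasWalkOfLength {Y : Type*} {dY : Y → Y → ℕ}
    {S : Finset ℕ} {j : Y → X} (hpe : IsPathExtensionOverTrunc N dY S j δ)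
    (hf : ∀ x y r, δ x y = some r → d (f x) (f y) = r) {y y' : Y} (hlt : dY y y' < N) :
    HasWalkOfLength d (f (j y)) (f (j y')) (dY y y') := by
  obtain ⟨-, -, -, hagree, -, path, hpath, -⟩ := hpe
  cases hδ : δ (j y) (j y') with
  | some r =>
    have hdist := hf _ _ r hδ
    rw [hagree y y' r hδ] at hdist
    exact hdist ▸ .single _ _
  | none =>
    obtain ⟨hhead, hlast, hsum⟩ := hpath y y' hδ
    exact hasWalkOfLength_of_listDeltaSumTrunc hf hsum hlt hhead hlast

end PathExtension

theorem oddTriangles_closed_under_pathExtensions_general (n : ℕ)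
    (dT : Fin 3 → Fin 3 → ℕ) (hT : IsTruncMetric ((n + 1) / 2) dT)
    (hTodd : Odd (dT 0 1 + dT 1 2 + dT 2 0))
    (hTbd : dT 0 1 + dT 1 2 + dT 2 0 ≤ n)
    {X : Type*} (j : Fin 3 → X) (δ : X → X → Option ℕ)
    (hpe : IsPathExtensionOverTrunc ((n + 1) / 2) dT (Finset.Icc 1 ((n + 1) / 2)) j δ)
    {α : Type*} (dA : α → α → ℕ) (hA : IsTruncMetric ((n + 1) / 2) dA)
    (hAfree : OmitsOddTriangles n dA) :
    ¬ ∃ f : X → α, ∀ x y r, δ x y = some r → dA (f x) (f y) = r := by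
  rintro ⟨f, hf⟩
  obtain ⟨-, -, hTsymm, hTtri⟩ := hT
  obtain ⟨-, hAzero, hAsymm, hAtri⟩ := hA
  obtain ⟨p, hp⟩ := hTodd
  -- an odd perimeter is strictly more than twice any side
  have h01 := two_mul_le_perimeter hTsymm hTtri 0 1 2
  have h12 := two_mul_le_perimeter hTsymm hTtri 1 2 0
  have h20 := two_mul_le_perimeter hTsymm hTtri 2 0 1
  have hclosed := ((hpe.hasWalkOfLength hf (y := 0) (y' := 1) (by omega)).append
    (hpe.hasWalkOfLength hf (y := 1) (y' := 2) (by omega))).append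
    (hpe.hasWalkOfLength hf (y := 2) (y' := 0) (by omega))
  have heven := hclosed.even_of_closed (fun a => (hAzero a a).2 rfl) hAsymm hAtri hAfree hTbd
  exact Nat.not_even_iff_odd.mpr ⟨p, hp⟩ heven

/-- The class of triangles of odd perimeter bounded by `n` is closed under path
extensions over `S = {1, …, n*}`: no path extension of such a triangle over `S`
admits a weak homomorphism into an `R_{n*}`-metric space omitting triangles of odd
perimeter bounded by `n`. -/
theorem oddTriangles_closed_under_pathExtensions (n : ℕ) (hn : 3 ≤ n) (hodd : Odd n)
    (dT : Fin 3 → Fin 3 → ℕ) (hT : IsTruncMetric ((n + 1) / 2) dT)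
    (hTodd : Odd (dT 0 1 + dT 1 2 + dT 2 0))
    (hTbd : dT 0 1 + dT 1 2 + dT 2 0 ≤ n)
    {X : Type*} (j : Fin 3 → X) (δ : X → X → Option ℕ)
    (hpe : IsPathExtensionOverTrunc ((n + 1) / 2) dT (Finset.Icc 1 ((n + 1) / 2)) j δ)
    {α : Type*} (dA : α → α → ℕ) (hA : IsTruncMetric ((n + 1) / 2) dA)
    (hAfree : OmitsOddTriangles n dA) :
    ¬ ∃ f : X → α, ∀ x y r, δ x y = some r → dA (f x) (f y) = r :=
  oddTriangles_closed_under_pathExtensions_general n dT hT hTodd hTbd j δ hpe dA hA hAfree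
end

section
/- Fix an odd integer n ≥ 3 and set n* = (n+1)/2. Let A be an R_{n*}-metric space omitting triangles of odd perimeter bounded by n. Then for every m ≥ 3 and every sequence x₁, …, x_m of (not necessarily distinct) points of A, if p = d(x₁,x₂) + d(x₂,x₃) + ⋯ + d(x_{m−1},x_m) + d(x_m,x₁) (ordinary sum in ℕ) satisfies p ≤ n, then p is even. -/
open Finset

theorem Finset.sum_range_add_mod {M : Type*} [AddCommMonoid M] (f : ℕ → M) (m j : ℕ) :
    ∑ i ∈ range m, f ((i + j) % m) = ∑ i ∈ range m, f i := by
  rcases Nat.eq_zero_or_pos m with rfl | hm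
  · simp
  have : NeZero m := ⟨hm.ne'⟩
  simp only [← Fin.sum_univ_eq_sum_range]
  exact Fintype.sum_equiv (Equiv.addRight (Fin.ofNat m j)) _ _ fun i => by simp [Fin.val_add]

theorem Finset.exists_mul_add_le_two_mul_sum (e : ℕ → ℕ) {m : ℕ} (hm : 0 < m) :
    ∃ j < m, m * (e j + e ((j + 1) % m)) ≤ 2 * ∑ i ∈ range m, e i := by
  have hsum : ∑ i ∈ range m, m * (e i + e ((i + 1) % m))
      = ∑ _i ∈ range m, 2 * ∑ i ∈ range m, e i := by
    rw [← mul_sum, sum_add_distrib, sum_range_add_mod, sum_const, card_range, smul_eq_mul]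
    ring
  obtain ⟨j, hj, hle⟩ := exists_le_of_sum_le (nonempty_range_iff.mpr hm.ne') hsum.le
  exact ⟨j, mem_range.mp hj, hle⟩

section Cycle

variable {α : Type*} (d : α → α → ℕ)

def cyclePerimeter (m : ℕ) (x : ℕ → α) : ℕ :=
  ∑ i ∈ range m, d (x i) (x ((i + 1) % m))

theorem cyclePerimeter_rotate (m j : ℕ) (x : ℕ → α) :
    cyclePerimeter d m (fun i => x ((i + j) % m)) = cyclePerimeter d m x := by
  have hmod : ∀ i, ((i + 1) % m + j) % m = ((i + j) % m + 1) % m := fun i => by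
    simp only [Nat.mod_add_mod, Nat.add_right_comm]
  simp only [cyclePerimeter, hmod]
  exact sum_range_add_mod (fun k => d (x k) (x ((k + 1) % m))) m j

theorem cyclePerimeter_succ (k : ℕ) (x : ℕ → α) :
    cyclePerimeter d (k + 1) x = ∑ i ∈ range k, d (x i) (x (i + 1)) + d (x k) (x 0) := by
  rw [cyclePerimeter, sum_range_succ, Nat.mod_self]
  congr 1
  exact sum_congr rfl fun i hi => by rw [Nat.mod_eq_of_lt (by simpa using hi)]

theorem cyclePerimeter_succ_add (k : ℕ) (x : ℕ → α) :
    cyclePerimeter d (k + 2) x + d (x k) (x 0)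
      = cyclePerimeter d (k + 1) x + d (x k) (x (k + 1)) + d (x (k + 1)) (x 0) := by
  rw [cyclePerimeter_succ, cyclePerimeter_succ, sum_range_succ]
  ring

theorem exists_rotate_light_corner (k : ℕ) (x : ℕ → α) :
    ∃ y : ℕ → α, cyclePerimeter d (k + 2) y = cyclePerimeter d (k + 2) x ∧
      (k + 2) * (d (y k) (y (k + 1)) + d (y (k + 1)) (y 0)) ≤ 2 * cyclePerimeter d (k + 2) x := by
  obtain ⟨j, hj, hpair⟩ :=
    exists_mul_add_le_two_mul_sum (fun i => d (x i) (x ((i + 1) % (k + 2)))) (m := k + 2)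
      (by omega)
  refine ⟨fun i => x ((i + (j + 2)) % (k + 2)), cyclePerimeter_rotate d _ _ x, ?_⟩
  have hk : (k + (j + 2)) % (k + 2) = j := by
    rw [show k + (j + 2) = j + (k + 2) by ring, Nat.add_mod_right, Nat.mod_eq_of_lt hj]
  have hk1 : (k + 1 + (j + 2)) % (k + 2) = (j + 1) % (k + 2) := by
    rw [show k + 1 + (j + 2) = j + 1 + (k + 2) by ring, Nat.add_mod_right]
  have h0 : (0 + (j + 2)) % (k + 2) = ((j + 1) % (k + 2) + 1) % (k + 2) := by
    rw [Nat.mod_add_mod, zero_add]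
  simpa only [cyclePerimeter, hk, hk1, h0] using hpair

end Cycle

namespace IsTruncMetric

variable {N n : ℕ} {α : Type*} {d : α → α → ℕ}

theorem even_triangle_perimeter (hA : IsTruncMetric N d) (hfree : OmitsOddTriangles n d)
    (a b c : α) (h : d a b + d b c + d c a ≤ n) : Even (d a b + d b c + d c a) := by
  obtain ⟨-, hzero, hsymm, -⟩ := hA
  have hself : ∀ a, d a a = 0 := fun a => (hzero a a).mpr rfl
  by_cases hab : a = b
  · subst hab; exact ⟨d a c, by rw [hself, hsymm c a]; ring⟩
  by_cases hbc : b = c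
  · subst hbc; exact ⟨d a b, by rw [hself, hsymm b a]; ring⟩
  by_cases hac : a = c
  · subst hac; exact ⟨d a b, by rw [hself, hsymm b a]; ring⟩
  exact Nat.not_odd_iff_even.mp (hfree a b c hab hbc hac h)

theorem even_cyclePerimeter (hA : IsTruncMetric N d) (hfree : OmitsOddTriangles n d)
    (hN : 2 * N ≤ n + 1) {m : ℕ} (hm : 3 ≤ m) (x : ℕ → α)
    (hp : cyclePerimeter d m x ≤ n) : Even (cyclePerimeter d m x) := by
  induction m, hm using Nat.le_induction generalizing x with
  | base =>
    have h3 : cyclePerimeter d 3 x = d (x 0) (x 1) + d (x 1) (x 2) + d (x 2) (x 0) := by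
      simp [cyclePerimeter, sum_range_succ]
    rw [h3] at hp ⊢
    exact hA.even_triangle_perimeter hfree _ _ _ hp
  | succ m hm ih =>
    obtain ⟨k, rfl⟩ : ∃ k, m = k + 1 := ⟨m - 1, by omega⟩
    change cyclePerimeter d (k + 2) x ≤ n at hp
    change Even (cyclePerimeter d (k + 2) x)
    obtain ⟨y, hP, hcorner⟩ := exists_rotate_light_corner d k x
    rw [← hP] at hp hcorner ⊢
    have hshort := cyclePerimeter_succ_add d k y
    have hca : d (y 0) (y k) ≤ N := hA.1 _ _
    have hac : d (y k) (y 0) ≤ d (y k) (y (k + 1)) + d (y (k + 1)) (y 0) := hA.2.2.2 _ _ _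
    have hsymm : d (y 0) (y k) = d (y k) (y 0) := hA.2.2.1 _ _
    have h4 : 4 * (d (y k) (y (k + 1)) + d (y (k + 1)) (y 0))
        ≤ (k + 2) * (d (y k) (y (k + 1)) + d (y (k + 1)) (y 0)) := by gcongr; omega
    have htri := hA.even_triangle_perimeter hfree (y k) (y (k + 1)) (y 0) (by omega)
    have hshort_even : Even (cyclePerimeter d (k + 1) y) := ih y (by omega)
    have hsum_even : Even (cyclePerimeter d (k + 2) y + 2 * d (y k) (y 0)) := by
      rw [show cyclePerimeter d (k + 2) y + 2 * d (y k) (y 0) = cyclePerimeter d (k + 1) y +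
          (d (y k) (y (k + 1)) + d (y (k + 1)) (y 0) + d (y 0) (y k)) by omega]
      exact hshort_even.add htri
    exact (Nat.even_add.mp hsum_even).mpr (even_two_mul _)

end IsTruncMetric

theorem even_cycle_perimeter_general (n : ℕ)
    {α : Type*} (d : α → α → ℕ) (hA : IsTruncMetric ((n + 1) / 2) d)
    (hAfree : OmitsOddTriangles n d)
    (m : ℕ) (hm : 3 ≤ m) (x : ℕ → α)
    (hp : ∑ i ∈ Finset.range m, d (x i) (x ((i + 1) % m)) ≤ n) :
    Even (∑ i ∈ Finset.range m, d (x i) (x ((i + 1) % m))) :=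
  hA.even_cyclePerimeter hAfree (Nat.mul_div_le (n + 1) 2) hm x hp

/-- In an `R_{n*}`-metric space omitting triangles of odd perimeter bounded by `n`
(`n ≥ 3` odd, `n* = (n+1)/2`), every cyclic sequence of `m ≥ 3` (not necessarily
distinct) points whose cyclic perimeter is at most `n` has even perimeter. -/
theorem even_cycle_perimeter (n : ℕ) (hn : 3 ≤ n) (hodd : Odd n)
    {α : Type*} (d : α → α → ℕ) (hA : IsTruncMetric ((n + 1) / 2) d)
    (hAfree : OmitsOddTriangles n d)
    (m : ℕ) (hm : 3 ≤ m) (x : ℕ → α)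
    (hp : ∑ i ∈ Finset.range m, d (x i) (x ((i + 1) % m)) ≤ n) :
    Even (∑ i ∈ Finset.range m, d (x i) (x ((i + 1) % m))) :=
  even_cycle_perimeter_general n d hA hAfree m hm x hp
end

section
/- Let R be an archimedean distance monoid and let S ⊆ R \ {0} be finite and nonempty. Then there exists k ∈ ℕ such that for every r₀ ∈ S, every n ≥ k, and all r₁, …, r_n ∈ S, one has r₀ ≤ r₁ ⊕ ⋯ ⊕ r_n. Consequently, the set Σ = {(r₀, r₁, …, r_n) : n > 0, each r_i ∈ S, and r₀ > r₁ ⊕ ⋯ ⊕ r_n} of finite tuples is finite. -/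
/-!
A sum of `n` elements of `S` is at least `n • min S`, and the archimedean property gives `k` with
`max S ≤ k • min S`; so sums of at least `k` terms dominate `S`. Hence every tuple in `Σ` has
length at most `k`, and there are only finitely many such tuples over the finite alphabet `S`.
-/

theorem archimedean_of_forall_pos_nsmul {R : Type*} [AddCommMonoid R] [PartialOrder R]
    (h0 : ∀ r : R, 0 ≤ r)
    (harch : ∀ r s : R, 0 < r → 0 < s → ∃ n : ℕ, 0 < n ∧ s ≤ n • r) : Archimedean R where
  arch x y hy := (h0 x).eq_or_lt.elim (fun hx => ⟨0, by simp [← hx]⟩)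
    fun hx => (harch y x hy hx).imp fun _ => And.right

theorem Finset.exists_le_list_sum_of_le_length {R : Type*} [AddCommMonoid R] [LinearOrder R]
    [IsOrderedAddMonoid R] [Archimedean R] (S : Finset R) (hS : ∀ x ∈ S, 0 < x) :
    ∃ k : ℕ, ∀ r₀ ∈ S, ∀ l : List R, k ≤ l.length → (∀ x ∈ l, x ∈ S) → r₀ ≤ l.sum := by
  obtain rfl | hne := S.eq_empty_or_nonempty
  · exact ⟨0, by simp⟩
  have hmin := hS _ (S.min'_mem hne)
  obtain ⟨k, hk⟩ := Archimedean.arch (S.max' hne) hmin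
  refine ⟨k, fun r₀ hr₀ l hl hlS => ?_⟩
  calc r₀ ≤ S.max' hne := S.le_max' r₀ hr₀
    _ ≤ k • S.min' hne := hk
    _ ≤ l.length • S.min' hne := nsmul_le_nsmul_left hmin.le hl
    _ ≤ l.sum := l.card_nsmul_le_sum _ fun x hx => S.min'_le x (hlS x hx)

theorem List.finite_setOf_length_le_forall_mem {α : Type*} {S : Set α} (hS : S.Finite) (n : ℕ) :
    {l : List α | l.length ≤ n ∧ ∀ x ∈ l, x ∈ S}.Finite := by
  have := hS.to_subtype
  refine ((List.finite_length_le S n).image (List.map (↑))).subset ?_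
  rintro l ⟨hl, hlS⟩
  lift l to List S using hlS
  exact ⟨l, by simpa using hl, rfl⟩

theorem archimedean_sums_dominate_general {R : Type*} [AddCommMonoid R] [LinearOrder R] [IsOrderedAddMonoid R]
    (h0 : ∀ r : R, 0 ≤ r)
    (harch : ∀ r s : R, 0 < r → 0 < s → ∃ n : ℕ, 0 < n ∧ s ≤ n • r)
    (S : Finset R) (hS0 : (0 : R) ∉ S) :
    (∃ k : ℕ, ∀ r₀ ∈ S, ∀ n : ℕ, k ≤ n → ∀ r : Fin n → R, (∀ i, r i ∈ S) →
      r₀ ≤ ∑ i, r i) ∧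
    Set.Finite {l : List R | ∃ (r₀ : R) (t : List R), l = r₀ :: t ∧ r₀ ∈ S ∧
      t ≠ [] ∧ (∀ r ∈ t, r ∈ S) ∧ t.sum < r₀} := by
  have := archimedean_of_forall_pos_nsmul h0 harch
  have hSpos : ∀ x ∈ S, 0 < x := fun x hx => (h0 x).lt_of_ne' (ne_of_mem_of_not_mem hx hS0)
  obtain ⟨k, hk⟩ := S.exists_le_list_sum_of_le_length hSpos
  refine ⟨⟨k, fun r₀ hr₀ n hn r hr => ?_⟩, ?_⟩
  · simpa [List.sum_ofFn] using hk r₀ hr₀ (List.ofFn r) (by simpa) (by simpa [List.mem_ofFn])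
  · refine (List.finite_setOf_length_le_forall_mem S.finite_toSet k).subset ?_
    rintro _ ⟨r₀, t, rfl, hr₀, -, ht, hsum⟩
    have hlen : t.length < k := by
      by_contra! hlen
      exact (hk r₀ hr₀ t hlen ht).not_gt hsum
    exact ⟨hlen, by simpa [hr₀] using ht⟩

/-- Over an archimedean distance monoid, for a finite nonempty `S ⊆ R \ {0}` there is
`k` such that any `⊕`-sum of at least `k` elements of `S` dominates every element of
`S`; consequently the set `Σ` of tuples `(r₀, r₁, …, r_n)` from `S` (here encoded as
lists `r₀ :: t` with `t ≠ []`) with `r₀ > r₁ ⊕ ⋯ ⊕ r_n` is finite. -/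
theorem archimedean_sums_dominate {R : Type*} [AddCommMonoid R] [LinearOrder R] [IsOrderedAddMonoid R]
    (h0 : ∀ r : R, 0 ≤ r)
    (harch : ∀ r s : R, 0 < r → 0 < s → ∃ n : ℕ, 0 < n ∧ s ≤ n • r)
    (S : Finset R) (hSne : S.Nonempty) (hS0 : (0 : R) ∉ S) :
    (∃ k : ℕ, ∀ r₀ ∈ S, ∀ n : ℕ, k ≤ n → ∀ r : Fin n → R, (∀ i, r i ∈ S) →
      r₀ ≤ ∑ i, r i) ∧
    Set.Finite {l : List R | ∃ (r₀ : R) (t : List R), l = r₀ :: t ∧ r₀ ∈ S ∧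
      t ≠ [] ∧ (∀ r ∈ t, r ∈ S) ∧ t.sum < r₀} :=
  archimedean_sums_dominate_general h0 harch S hS0
end

section
/- Let R be a semi-archimedean distance monoid and (A,d) an R-metric space. Suppose a, a', b, b' ∈ A are such that for every integer k > 0: k·d(a,a') < d(a,b), k·d(b,b') < d(a,b), k·d(a,a') < d(a',b'), and k·d(b,b') < d(a',b') (where k·r denotes the k-fold sum r ⊕ ⋯ ⊕ r). Then d(a,b) = d(a',b'). -/
/-!
By the triangle inequality, `d a b ≤ d a a' + d a' b' + d b b'`. Semi-archimedeanity lets the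
summand `d a' b'` absorb the two summands that are infinitesimal relative to it, so
`d a b ≤ d a' b'`; the reverse inequality is symmetric.
-/

def IsGenMetric {R : Type*} [AddCommMonoid R] [LinearOrder R] [IsOrderedAddMonoid R] {α : Type*}
    (d : α → α → R) : Prop :=
  (∀ a b, d a b = 0 ↔ a = b) ∧ (∀ a b, d a b = d b a) ∧
  (∀ a b c, d a c ≤ d a b + d b c)

theorem IsGenMetric.le_add_add {R : Type*} [AddCommMonoid R] [LinearOrder R] [IsOrderedAddMonoid R]
    {α : Type*} {d : α → α → R} (hmet : IsGenMetric d) (a a' b b' : α) :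
    d a b ≤ d a a' + d a' b' + d b b' := by
  obtain ⟨-, hsym, htri⟩ := hmet
  calc d a b ≤ d a a' + d a' b := htri a a' b
    _ ≤ d a a' + (d a' b' + d b' b) := add_le_add_right (htri a' b' b) _
    _ = d a a' + d a' b' + d b b' := by rw [hsym b' b, add_assoc]

section SemiArchimedean

variable {R : Type*} [AddCommMonoid R] [LinearOrder R]
  (h0 : ∀ r : R, 0 ≤ r)
  (hsemi : ∀ r s : R, 0 < r → 0 < s → (∀ n : ℕ, 0 < n → n • r < s) → r + s = s)
include h0 hsemi

theorem add_eq_right_of_forall_nsmul_lt {r s : R} (h : ∀ n : ℕ, 0 < n → n • r < s) :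
    r + s = s := by
  rcases (h0 r).eq_or_lt with rfl | hr
  · exact zero_add s
  · have hs : 0 < s := hr.trans (by simpa using h 1 one_pos)
    exact hsemi r s hr hs h

theorem le_of_le_add_add_of_forall_nsmul_lt {x y s t : R}
    (hx : ∀ n : ℕ, 0 < n → n • x < s) (hy : ∀ n : ℕ, 0 < n → n • y < s)
    (ht : t ≤ x + s + y) : t ≤ s := by
  calc t ≤ x + s + y := ht
    _ = x + (y + s) := by rw [add_assoc, add_comm s]
    _ = s := by
      rw [add_eq_right_of_forall_nsmul_lt h0 hsemi hy, add_eq_right_of_forall_nsmul_lt h0 hsemi hx]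

end SemiArchimedean

/-- In a metric space over a semi-archimedean distance monoid, if `d a a'` and
`d b b'` are infinitesimal with respect to both `d a b` and `d a' b'`, then
`d a b = d a' b'`. -/
theorem semiArchimedean_distance_eq {R : Type*} [AddCommMonoid R] [LinearOrder R] [IsOrderedAddMonoid R]
    (h0 : ∀ r : R, 0 ≤ r)
    (hsemi : ∀ r s : R, 0 < r → 0 < s → (∀ n : ℕ, 0 < n → n • r < s) → r + s = s)
    {α : Type*} (d : α → α → R) (hmet : IsGenMetric d)
    (a a' b b' : α)
    (h1 : ∀ k : ℕ, 0 < k → k • d a a' < d a b)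
    (h2 : ∀ k : ℕ, 0 < k → k • d b b' < d a b)
    (h3 : ∀ k : ℕ, 0 < k → k • d a a' < d a' b')
    (h4 : ∀ k : ℕ, 0 < k → k • d b b' < d a' b') :
    d a b = d a' b' := by
  have hsym := hmet.2.1
  apply le_antisymm
  · exact le_of_le_add_add_of_forall_nsmul_lt h0 hsemi h3 h4 (hmet.le_add_add a a' b b')
  · refine le_of_le_add_add_of_forall_nsmul_lt h0 hsemi h1 h2 ?_
    simpa only [hsym a' a, hsym b' b] using hmet.le_add_add a' a b' b
end

section
/- Fix an odd integer n ≥ 3 and set n* = (n+1)/2. Let (A, d_A) and (B, d_B) be finite R_{n*}-metric spaces, each omitting triangles of odd perimeter bounded by n, with A ∩ B nonempty and d_A = d_B on (A ∩ B) × (A ∩ B). Define d_C on C = A ∪ B by: d_C(x,y) = d_A(x,y) if x,y ∈ A; d_C(x,y) = d_B(x,y) if x,y ∈ B; and d_C(x,y) = d_C(y,x) = min_{z ∈ A∩B} min(n*, d_A(x,z) + d_B(z,y)) if x ∈ A \ B and y ∈ B \ A. Then (C, d_C) is an R_{n*}-metric space omitting triangles of odd perimeter bounded by n. -/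
/-- The `R_N`-metric axioms for `d`, restricted to a subset `A`. -/
def IsTruncMetricOn (N : ℕ) {γ : Type*} (A : Set γ) (d : γ → γ → ℕ) : Prop :=
  (∀ a ∈ A, ∀ b ∈ A, d a b ≤ N) ∧ (∀ a ∈ A, ∀ b ∈ A, (d a b = 0 ↔ a = b)) ∧
  (∀ a ∈ A, ∀ b ∈ A, d a b = d b a) ∧
  (∀ a ∈ A, ∀ b ∈ A, ∀ c ∈ A, d a c ≤ d a b + d b c)

/-- `d` omits triangles of odd perimeter bounded by `n`, restricted to a subset `A`. -/
def OmitsOddTrianglesOn (n : ℕ) {γ : Type*} (A : Set γ) (d : γ → γ → ℕ) : Prop :=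
  ∀ a ∈ A, ∀ b ∈ A, ∀ c ∈ A, a ≠ b → b ≠ c → a ≠ c →
    d a b + d b c + d c a ≤ n → ¬ Odd (d a b + d b c + d c a)

/-! Cross distances are realised through the intersection: for `x ∈ A` and `y ∈ B`, either
`d x y = n*` or `d x y = d x z + d z y` for some `z ∈ A ∩ B`; the metric axioms follow from
this alone. Of the three vertices of a triangle two lie on the same side, say `a, b ∈ A`. A
perimeter `≤ n < 2 n*` forces `d b c, d c a < n*`, so both sides are realised through points
`v, u ∈ A ∩ B`. Cutting the triangle first at `v` and then at `u` leaves the triangles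
`a b v ⊆ A`, `v c u ⊆ B` and `v u a ⊆ A`, none longer than `a b c`, whose perimeters add up to
that of `a b c` modulo `2`. -/

section

variable {γ : Type*} {N n : ℕ} {A B : Set γ} {d d' : γ → γ → ℕ} {a b c x y z w : γ}

def perimeter (d : γ → γ → ℕ) (a b c : γ) : ℕ := d a b + d b c + d c a

lemma perimeter_rotate : perimeter d a b c = perimeter d b c a := by
  unfold perimeter; omega

namespace IsTruncMetricOn

lemma le_bound (h : IsTruncMetricOn N A d) (ha : a ∈ A) (hb : b ∈ A) : d a b ≤ N :=
  h.1 a ha b hb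

lemma eq_zero_iff (h : IsTruncMetricOn N A d) (ha : a ∈ A) (hb : b ∈ A) : d a b = 0 ↔ a = b :=
  h.2.1 a ha b hb

lemma dist_self (h : IsTruncMetricOn N A d) (ha : a ∈ A) : d a a = 0 :=
  (h.eq_zero_iff ha ha).2 rfl

lemma symm (h : IsTruncMetricOn N A d) (ha : a ∈ A) (hb : b ∈ A) : d a b = d b a :=
  h.2.2.1 a ha b hb

lemma triangle (h : IsTruncMetricOn N A d) (ha : a ∈ A) (hb : b ∈ A) (hc : c ∈ A) :
    d a c ≤ d a b + d b c :=
  h.2.2.2 a ha b hb c hc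

lemma congr (h : IsTruncMetricOn N A d) (hd : ∀ x ∈ A, ∀ y ∈ A, d' x y = d x y) :
    IsTruncMetricOn N A d' := by
  refine ⟨fun x hx y hy => ?_, fun x hx y hy => ?_, fun x hx y hy => ?_, fun x hx y hy z hz => ?_⟩
  · rw [hd x hx y hy]; exact h.le_bound hx hy
  · rw [hd x hx y hy]; exact h.eq_zero_iff hx hy
  · rw [hd x hx y hy, hd y hy x hx]; exact h.symm hx hy
  · rw [hd x hx z hz, hd x hx y hy, hd y hy z hz]; exact h.triangle hx hy hz

end IsTruncMetricOn

namespace OmitsOddTrianglesOn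

lemma congr (h : OmitsOddTrianglesOn n A d) (hd : ∀ x ∈ A, ∀ y ∈ A, d' x y = d x y) :
    OmitsOddTrianglesOn n A d' := by
  intro a ha b hb c hc
  rw [hd a ha b hb, hd b hb c hc, hd c hc a ha]
  exact h a ha b hb c hc

lemma even_perimeter (h : OmitsOddTrianglesOn n A d) (hd : IsTruncMetricOn N A d)
    (ha : a ∈ A) (hb : b ∈ A) (hc : c ∈ A) (hP : perimeter d a b c ≤ n) :
    Even (perimeter d a b c) := by
  have := hd.symm ha hb; have := hd.symm hb hc; have := hd.symm hc ha
  have := hd.dist_self ha; have := hd.dist_self hb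
  rcases eq_or_ne a b with rfl | hab
  · rw [Nat.even_iff, perimeter]; omega
  rcases eq_or_ne b c with rfl | hbc
  · rw [Nat.even_iff, perimeter]; omega
  rcases eq_or_ne a c with rfl | hac
  · rw [Nat.even_iff, perimeter]; omega
  exact Nat.not_odd_iff_even.mp (h a ha b hb c hc hab hbc hac hP)

end OmitsOddTrianglesOn

/-- The perimeters of `a b w` and `a w c` add up to that of `a b c` plus `2 * d a w`. -/
lemma IsTruncMetric.even_perimeter_of_eq_add (hd : IsTruncMetric N d)
    (hw : d b c = d b w + d w c)
    (h₁ : perimeter d a b w ≤ perimeter d a b c → Even (perimeter d a b w))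
    (h₂ : perimeter d a w c ≤ perimeter d a b c → Even (perimeter d a w c)) :
    Even (perimeter d a b c) := by
  obtain ⟨-, -, hsymm, htri⟩ := hd
  have := hsymm w a; have := htri w c a; have := htri a b w
  have e₁ := h₁ (by unfold perimeter; omega)
  have e₂ := h₂ (by unfold perimeter; omega)
  rw [Nat.even_iff] at e₁ e₂ ⊢
  unfold perimeter at e₁ e₂ ⊢
  omega

/-- For `x ∈ A` and `y ∈ B` this says `d x y = min N (min_{z ∈ A ∩ B} (d x z + d z y))`, in a
form that is symmetric in `A` and `B`. -/
structure IsFreeAmalgam (N : ℕ) (A B : Set γ) (d : γ → γ → ℕ) : Prop where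
  cover : ∀ x, x ∈ A ∨ x ∈ B
  left : IsTruncMetricOn N A d
  right : IsTruncMetricOn N B d
  symm : ∀ x y, d x y = d y x
  le_bound : ∀ x y, d x y ≤ N
  le_add : ∀ x ∈ A, ∀ y ∈ B, ∀ z ∈ A ∩ B, d x y ≤ d x z + d z y
  exists_eq_add : ∀ x ∈ A, ∀ y ∈ B, d x y < N → ∃ z ∈ A ∩ B, d x y = d x z + d z y

namespace IsFreeAmalgam

lemma swap (h : IsFreeAmalgam N A B d) : IsFreeAmalgam N B A d where
  cover x := (h.cover x).symm
  left := h.right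
  right := h.left
  symm := h.symm
  le_bound := h.le_bound
  le_add x hx y hy z hz := by
    rw [h.symm x y, h.symm x z, h.symm z y, add_comm]
    exact h.le_add y hy x hx z hz.symm
  exists_eq_add x hx y hy hlt := by
    rw [h.symm x y] at hlt ⊢
    obtain ⟨z, hz, e⟩ := h.exists_eq_add y hy x hx hlt
    exact ⟨z, hz.symm, by rw [e, h.symm x z, h.symm z y, add_comm]⟩

lemma eq_of_dist_eq_zero_of_mem_left (h : IsFreeAmalgam N A B d) (hN : 0 < N) (hx : x ∈ A)
    (hxy : d x y = 0) : x = y := by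
  rcases h.cover y with hy | hy
  · exact (h.left.eq_zero_iff hx hy).1 hxy
  obtain ⟨z, ⟨hzA, hzB⟩, e⟩ := h.exists_eq_add x hx y hy (hxy ▸ hN)
  rw [(h.left.eq_zero_iff hx hzA).1 (by omega)]
  exact (h.right.eq_zero_iff hzB hy).1 (by omega)

lemma eq_zero_iff (h : IsFreeAmalgam N A B d) (hN : 0 < N) : d x y = 0 ↔ x = y := by
  refine ⟨fun hxy => ?_, ?_⟩
  · rcases h.cover x with hx | hx
    · exact h.eq_of_dist_eq_zero_of_mem_left hN hx hxy
    · exact h.swap.eq_of_dist_eq_zero_of_mem_left hN hx hxy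
  · rintro rfl
    rcases h.cover x with hx | hx
    · exact h.left.dist_self hx
    · exact h.right.dist_self hx

lemma triangle_of_mem_left_left (h : IsFreeAmalgam N A B d) (hx : x ∈ A) (hz : z ∈ A)
    (y : γ) : d x z ≤ d x y + d y z := by
  rcases h.cover y with hy | hy
  · exact h.left.triangle hx hy hz
  by_cases hlt : d x y < N ∧ d z y < N
  swap
  · have := h.le_bound x z; have := h.symm y z
    omega
  obtain ⟨u, ⟨huA, huB⟩, hxu⟩ := h.exists_eq_add x hx y hy hlt.1
  obtain ⟨v, ⟨hvA, hvB⟩, hzv⟩ := h.exists_eq_add z hz y hy hlt.2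
  have := h.left.triangle hx huA hz
  have := h.left.triangle huA hvA hz
  have := h.right.triangle huB hy hvB
  have := h.symm y z; have := h.symm v z; have := h.symm y v
  omega

lemma triangle_of_mem_left_left_right (h : IsFreeAmalgam N A B d) (hx : x ∈ A) (hy : y ∈ A)
    (hz : z ∈ B) : d x z ≤ d x y + d y z := by
  by_cases hlt : d y z < N
  swap
  · have := h.le_bound x z
    omega
  obtain ⟨w, hw, hyw⟩ := h.exists_eq_add y hy z hz hlt
  have := h.le_add x hx z hz w hw
  have := h.left.triangle hx hy hw.1
  omega

lemma triangle_of_mem_left (h : IsFreeAmalgam N A B d) (hx : x ∈ A) (y z : γ) :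
    d x z ≤ d x y + d y z := by
  rcases h.cover z with hz | hz
  · exact h.triangle_of_mem_left_left hx hz y
  rcases h.cover y with hy | hy
  · exact h.triangle_of_mem_left_left_right hx hy hz
  have := h.swap.triangle_of_mem_left_left_right hz hy hx
  rw [h.symm z x, h.symm z y, h.symm y x] at this
  omega

lemma triangle (h : IsFreeAmalgam N A B d) (x y z : γ) : d x z ≤ d x y + d y z := by
  rcases h.cover x with hx | hx
  · exact h.triangle_of_mem_left hx y z
  · exact h.swap.triangle_of_mem_left hx y z

lemma isTruncMetric (h : IsFreeAmalgam N A B d) (hN : 0 < N) : IsTruncMetric N d :=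
  ⟨h.le_bound, fun _ _ => h.eq_zero_iff hN, h.symm, h.triangle⟩

lemma even_perimeter_of_mem_left (h : IsFreeAmalgam N A B d) (hnN : n < 2 * N)
    (hA : OmitsOddTrianglesOn n A d) (hB : OmitsOddTrianglesOn n B d) (ha : a ∈ A)
    (hb : b ∈ A) (hP : perimeter d a b c ≤ n) : Even (perimeter d a b c) := by
  have hd := h.isTruncMetric (by omega)
  rcases h.cover c with hc | hc
  · exact hA.even_perimeter h.left ha hb hc hP
  -- a side of length `N` would force a perimeter of at least `2 * N > n`
  have hbc : d b c < N := by
    have := h.triangle b a c; have := h.symm b a; have := h.symm c a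
    unfold perimeter at hP; omega
  have hac : d a c < N := by
    have := h.triangle a b c; have := h.symm c a
    unfold perimeter at hP; omega
  obtain ⟨v, ⟨hvA, hvB⟩, hbv⟩ := h.exists_eq_add b hb c hc hbc
  obtain ⟨u, ⟨huA, huB⟩, hau⟩ := h.exists_eq_add a ha c hc hac
  have hcu : d c a = d c u + d u a := by rw [h.symm c a, h.symm c u, h.symm u a]; omega
  refine hd.even_perimeter_of_eq_add hbv
    (fun hle => hA.even_perimeter h.left ha hb hvA (hle.trans hP)) fun hle => ?_
  rw [perimeter_rotate] at hle ⊢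
  refine hd.even_perimeter_of_eq_add hcu
    (fun hle' => hB.even_perimeter h.right hvB hc huB (by omega))
    (fun hle' => hA.even_perimeter h.left hvA huA ha (by omega))

lemma even_perimeter (h : IsFreeAmalgam N A B d) (hnN : n < 2 * N)
    (hA : OmitsOddTrianglesOn n A d) (hB : OmitsOddTrianglesOn n B d)
    (hP : perimeter d a b c ≤ n) : Even (perimeter d a b c) := by
  have hbca : perimeter d b c a = perimeter d a b c := perimeter_rotate.symm
  have hcab : perimeter d c a b = perimeter d a b c := perimeter_rotate
  rcases h.cover a with ha | ha <;> rcases h.cover b with hb | hb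
  · exact h.even_perimeter_of_mem_left hnN hA hB ha hb hP
  · rcases h.cover c with hc | hc
    · exact hcab ▸ h.even_perimeter_of_mem_left hnN hA hB hc ha (hcab ▸ hP)
    · exact hbca ▸ h.swap.even_perimeter_of_mem_left hnN hB hA hb hc (hbca ▸ hP)
  · rcases h.cover c with hc | hc
    · exact hbca ▸ h.even_perimeter_of_mem_left hnN hA hB hb hc (hbca ▸ hP)
    · exact hcab ▸ h.swap.even_perimeter_of_mem_left hnN hB hA hc ha (hcab ▸ hP)
  · exact h.swap.even_perimeter_of_mem_left hnN hB hA ha hb hP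

lemma omitsOddTriangles (h : IsFreeAmalgam N A B d) (hnN : n < 2 * N)
    (hA : OmitsOddTrianglesOn n A d) (hB : OmitsOddTrianglesOn n B d) :
    OmitsOddTriangles n d := fun a b c _ _ _ hP =>
  Nat.not_odd_iff_even.mpr (h.even_perimeter (a := a) (b := b) (c := c) hnN hA hB hP)

end IsFreeAmalgam

section Finset

variable [DecidableEq γ] {A B : Finset γ} (hne : (A ∩ B).Nonempty)

lemma dist_eq_inf'_of_mem_inter (hA : IsTruncMetricOn N A d) (hB : IsTruncMetricOn N B d)
    (hx : x ∈ A) (hy : y ∈ B) (hxy : x ∈ B ∨ y ∈ A) :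
    d x y = (A ∩ B).inf' hne (fun z => min N (d x z + d z y)) := by
  refine le_antisymm (Finset.le_inf' _ _ fun z hz => ?_) ?_
  · rw [Finset.mem_inter] at hz
    rcases hxy with hxB | hyA
    · exact le_min (hB.le_bound hxB hy) (hB.triangle hxB hz.2 hy)
    · exact le_min (hA.le_bound hx hyA) (hA.triangle hx hz.1 hyA)
  · rcases hxy with hxB | hyA
    · refine (Finset.inf'_le _ (Finset.mem_inter.2 ⟨hx, hxB⟩)).trans ?_
      simp only [hA.dist_self hx, zero_add, min_le_iff, le_refl, or_true]
    · refine (Finset.inf'_le _ (Finset.mem_inter.2 ⟨hyA, hy⟩)).trans ?_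
      simp only [hB.dist_self hy, add_zero, min_le_iff, le_refl, or_true]

lemma IsFreeAmalgam.of_inf' (hcover : ∀ x, x ∈ A ∨ x ∈ B) (hA : IsTruncMetricOn N A d)
    (hB : IsTruncMetricOn N B d)
    (hcross : ∀ x ∈ A, x ∉ B → ∀ y ∈ B, y ∉ A →
      d x y = (A ∩ B).inf' hne (fun z => min N (d x z + d z y)) ∧ d y x = d x y) :
    IsFreeAmalgam N A B d := by
  have hformula : ∀ x ∈ A, ∀ y ∈ B,
      d x y = (A ∩ B).inf' hne (fun z => min N (d x z + d z y)) := by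
    intro x hx y hy
    by_cases hxy : x ∈ B ∨ y ∈ A
    · exact dist_eq_inf'_of_mem_inter hne hA hB hx hy hxy
    · obtain ⟨hxB, hyA⟩ := not_or.1 hxy
      exact (hcross x hx hxB y hy hyA).1
  have hsymm : ∀ x ∈ A, ∀ y ∈ B, d y x = d x y := by
    intro x hx y hy
    by_cases hyA : y ∈ A
    · exact hA.symm hyA hx
    by_cases hxB : x ∈ B
    · exact hB.symm hy hxB
    exact (hcross x hx hxB y hy hyA).2
  have hbound : ∀ x ∈ A, ∀ y ∈ B, d x y ≤ N := fun x hx y hy =>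
    (hformula x hx y hy).trans_le ((Finset.inf'_le _ hne.choose_spec).trans (min_le_left _ _))
  refine ⟨hcover, hA, hB, fun x y => ?_, fun x y => ?_, fun x hx y hy z hz => ?_,
    fun x hx y hy hlt => ?_⟩
  · rcases hcover x with hx | hx <;> rcases hcover y with hy | hy
    exacts [hA.symm hx hy, (hsymm x hx y hy).symm, hsymm y hy x hx, hB.symm hx hy]
  · rcases hcover x with hx | hx <;> rcases hcover y with hy | hy
    exacts [hA.le_bound hx hy, hbound x hx y hy, hsymm y hy x hx ▸ hbound y hy x hx,
      hB.le_bound hx hy]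
  · rw [hformula x hx y hy]
    exact (Finset.inf'_le _ (Finset.mem_coe.1 (Finset.coe_inter A B ▸ hz))).trans
      (min_le_right _ _)
  · obtain ⟨z, hz, e⟩ := Finset.exists_mem_eq_inf' hne (fun z => min N (d x z + d z y))
    rw [← hformula x hx y hy] at e
    refine ⟨z, Finset.coe_inter A B ▸ Finset.mem_coe.2 hz, ?_⟩
    rw [e] at hlt ⊢
    omega

end Finset

end

theorem free_amalgamation_oddTriangleFree_general (n : ℕ) (hodd : Odd n)
    {γ : Type*} [DecidableEq γ] (A B : Finset γ) (hcover : ∀ x : γ, x ∈ A ∨ x ∈ B)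
    (hne : (A ∩ B).Nonempty)
    (dA dB : γ → γ → ℕ)
    (hA : IsTruncMetricOn ((n + 1) / 2) (A : Set γ) dA)
    (hB : IsTruncMetricOn ((n + 1) / 2) (B : Set γ) dB)
    (hAfree : OmitsOddTrianglesOn n (A : Set γ) dA)
    (hBfree : OmitsOddTrianglesOn n (B : Set γ) dB)
    (dC : γ → γ → ℕ)
    (hCA : ∀ x ∈ A, ∀ y ∈ A, dC x y = dA x y)
    (hCB : ∀ x ∈ B, ∀ y ∈ B, dC x y = dB x y)
    (hCross : ∀ x ∈ A, x ∉ B → ∀ y ∈ B, y ∉ A →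
      dC x y = (A ∩ B).inf' hne (fun z => min ((n + 1) / 2) (dA x z + dB z y)) ∧
      dC y x = (A ∩ B).inf' hne (fun z => min ((n + 1) / 2) (dA x z + dB z y))) :
    IsTruncMetric ((n + 1) / 2) dC ∧ OmitsOddTriangles n dC := by
  have hnN : n < 2 * ((n + 1) / 2) := by
    obtain ⟨k, rfl⟩ := hodd
    omega
  have hcross : ∀ x ∈ A, x ∉ B → ∀ y ∈ B, y ∉ A →
      dC x y = (A ∩ B).inf' hne (fun z => min ((n + 1) / 2) (dC x z + dC z y)) ∧
      dC y x = dC x y := by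
    intro x hx hxB y hy hyA
    obtain ⟨hxy, hyx⟩ := hCross x hx hxB y hy hyA
    refine ⟨hxy.trans (Finset.inf'_congr hne rfl fun z hz => ?_), hyx.trans hxy.symm⟩
    rw [Finset.mem_inter] at hz
    rw [hCA x hx z hz.1, hCB z hz.2 y hy]
  have h := IsFreeAmalgam.of_inf' hne hcover (hA.congr hCA) (hB.congr hCB) hcross
  exact ⟨h.isTruncMetric (by omega),
    h.omitsOddTriangles hnN (hAfree.congr hCA) (hBfree.congr hCB)⟩

/-- For odd `n ≥ 3` and `n* = (n+1)/2`, the free amalgamation of two finite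
`R_{n*}`-metric spaces omitting triangles of odd perimeter bounded by `n` over their
nonempty intersection (with cross distances
`min_{z ∈ A ∩ B} min(n*, d_A x z + d_B z y)`) is again an `R_{n*}`-metric space
omitting triangles of odd perimeter bounded by `n`. -/
theorem free_amalgamation_oddTriangleFree (n : ℕ) (hn : 3 ≤ n) (hodd : Odd n)
    {γ : Type*} [DecidableEq γ] (A B : Finset γ) (hcover : ∀ x : γ, x ∈ A ∨ x ∈ B)
    (hne : (A ∩ B).Nonempty)
    (dA dB : γ → γ → ℕ)
    (hA : IsTruncMetricOn ((n + 1) / 2) (A : Set γ) dA)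
    (hB : IsTruncMetricOn ((n + 1) / 2) (B : Set γ) dB)
    (hAfree : OmitsOddTrianglesOn n (A : Set γ) dA)
    (hBfree : OmitsOddTrianglesOn n (B : Set γ) dB)
    (hagree : ∀ x ∈ A ∩ B, ∀ y ∈ A ∩ B, dA x y = dB x y)
    (dC : γ → γ → ℕ)
    (hCA : ∀ x ∈ A, ∀ y ∈ A, dC x y = dA x y)
    (hCB : ∀ x ∈ B, ∀ y ∈ B, dC x y = dB x y)
    (hCross : ∀ x ∈ A, x ∉ B → ∀ y ∈ B, y ∉ A →
      dC x y = (A ∩ B).inf' hne (fun z => min ((n + 1) / 2) (dA x z + dB z y)) ∧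
      dC y x = (A ∩ B).inf' hne (fun z => min ((n + 1) / 2) (dA x z + dB z y))) :
    IsTruncMetric ((n + 1) / 2) dC ∧ OmitsOddTriangles n dC :=
  free_amalgamation_oddTriangleFree_general n hodd A B hcover hne dA dB hA hB hAfree hBfree dC hCA
    hCB hCross
end
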